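/- The class of C₄-free graphs has unbounded clique-width: for every k ≥ 1 there exists a finite simple graph containing no cycle of length 4 as a subgraph whose clique-width is strictly greater than k. -/

import Mathlib

/-- The color-controlled join of two vertex-disjoint colored graphs:
disjoint union plus all edges between a vertex of `G₁` colored `i` and a vertex of
`G₂` colored `j` for `(i,j) ∈ S`. -/
def joinGraph {k : ℕ} {α β : Type*} (G₁ : SimpleGraph α) (G₂ : SimpleGraph β)
    (c₁ : α → Fin k) (c₂ : β → Fin k) (S : Set (Fin k × Fin k)) : SimpleGraph (α ⊕ β) where
  Adj x y :=
    match x, y with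
    | Sum.inl a, Sum.inl b => G₁.Adj a b
    | Sum.inr a, Sum.inr b => G₂.Adj a b
    | Sum.inl a, Sum.inr b => (c₁ a, c₂ b) ∈ S
    | Sum.inr b, Sum.inl a => (c₁ a, c₂ b) ∈ S
  symm := by
    constructor
    rintro (a | a) (b | b) h
    · exact G₁.symm.symm _ _ h
    · exact h
    · exact h
    · exact G₂.symm.symm _ _ h
  loopless := by
    constructor
    rintro (a | a) h
    · exact G₁.loopless.irrefl a h
    · exact G₂.loopless.irrefl a h

/-- Add all edges between vertices colored `i` and vertices colored `j`. -/
def addColorEdges {k : ℕ} {α : Type*} (G : SimpleGraph α) (c : α → Fin k)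
    (i j : Fin k) : SimpleGraph α where
  Adj u v := G.Adj u v ∨ (u ≠ v ∧ ((c u = i ∧ c v = j) ∨ (c u = j ∧ c v = i)))
  symm := by
    constructor
    intro u v h
    rcases h with h | ⟨hne, hc⟩
    · exact Or.inl h.symm
    · exact Or.inr ⟨hne.symm, hc.symm.imp And.symm And.symm⟩
  loopless := by
    constructor
    intro v h
    rcases h with h | ⟨hne, _⟩
    · exact G.loopless.irrefl v h
    · exact hne rfl

/-- Clique-width expressions with colors in `Fin k`. -/
inductive CWExpr (k : ℕ) : Type
  | single (c : Fin k) : CWExpr k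
  | union (t₁ t₂ : CWExpr k) : CWExpr k
  | addEdges (i j : Fin k) (hij : i ≠ j) (t : CWExpr k) : CWExpr k
  | recolor (i j : Fin k) (t : CWExpr k) : CWExpr k

namespace CWExpr

variable {k : ℕ}

/-- The vertex set of the colored graph built by a clique-width expression. -/
def V : CWExpr k → Type
  | single _ => Unit
  | union t₁ t₂ => t₁.V ⊕ t₂.V
  | addEdges _ _ _ t => t.V
  | recolor _ _ t => t.V

/-- The coloring of the colored graph built by a clique-width expression. -/
def coloring : (t : CWExpr k) → t.V → Fin k
  | single c => fun _ => c
  | union t₁ t₂ => Sum.elim t₁.coloring t₂.coloring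
  | addEdges _ _ _ t => t.coloring
  | recolor i j t => fun v => if t.coloring v = i then j else t.coloring v

/-- The graph built by a clique-width expression. -/
def graph : (t : CWExpr k) → SimpleGraph t.V
  | single _ => ⊥
  | union t₁ t₂ => joinGraph t₁.graph t₂.graph t₁.coloring t₂.coloring ∅
  | addEdges i j _ t => addColorEdges t.graph t.coloring i j
  | recolor _ _ t => t.graph

end CWExpr

/-- `G` has clique-width at most `k`: it is the underlying graph of a colored graph
constructible by the clique-width operations with `k` colors. -/
def HasCliqueWidthLE {V : Type*} (G : SimpleGraph V) (k : ℕ) : Prop :=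
  ∃ t : CWExpr k, Nonempty (G ≃g t.graph)

/-- The clique-width of a graph: the least `k` such that `G` is constructible with `k` colors. -/
noncomputable def cliqueWidth {V : Type*} (G : SimpleGraph V) : ℕ :=
  sInf {k | HasCliqueWidthLE G k}


/-- `G` contains no cycle of length 4 as a subgraph. -/
def C4Free {V : Type*} (G : SimpleGraph V) : Prop :=
  ¬ ∃ u v w x : V, u ≠ v ∧ u ≠ w ∧ u ≠ x ∧ v ≠ w ∧ v ≠ x ∧ w ≠ x ∧
    G.Adj u v ∧ G.Adj v w ∧ G.Adj w x ∧ G.Adj x u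

/-!
A `k`-expression on `n ≥ 2` vertices is a disjoint union of two smaller expressions followed by
`addEdges`/`recolor` steps, and any such sequence of steps acts like one of finitely many
"color operations" (a recoloring map and a graph on the colors). Splitting the vertex set
accordingly gives the recurrence `f n ≤ ∑ₘ C(n, m) · E · f m · f (n - m)`, with `E` the number of
color operations, for the number `f n` of colored graphs on `Fin n` realized with `k` colors;
hence at most `(n!)² (k E)ⁿ` labelled graphs on `n` vertices have clique-width at most `k`.

On the other hand the point–line incidence graph of the affine plane over `ZMod p` is `C₄`-free
(two points lie on at most one line), so its `2 ^ p³` spanning subgraphs are `C₄`-free labelled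
graphs on `2p²` vertices; for large `p` this exceeds `((2p²)!)² (k E)^(2p²)`.
-/

open SimpleGraph Finset
open scoped Nat

abbrev ColoredGraph (k : ℕ) (α : Type*) := SimpleGraph α × (α → Fin k)

/-- `(φ, R)` encodes a composite of `addEdges` and `recolor` steps: first join the vertices whose
colors are adjacent in `R`, then recolor by `φ`. -/
abbrev ColorOps (k : ℕ) := (Fin k → Fin k) × SimpleGraph (Fin k)

namespace ColoredGraph

variable {k : ℕ} {α β γ δ : Type*}

def pullback (f : α → β) (p : ColoredGraph k β) : ColoredGraph k α :=
  (p.1.comap f, p.2 ∘ f)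

protected def sum (p : ColoredGraph k α) (q : ColoredGraph k β) : ColoredGraph k (α ⊕ β) :=
  (p.1 ⊕g q.1, Sum.elim p.2 q.2)

def mapColor {m : ℕ} (f : Fin k → Fin m) (p : ColoredGraph k α) : ColoredGraph m α :=
  (p.1, f ∘ p.2)

@[simp] lemma pullback_pullback (f : α → β) (g : β → γ) (p : ColoredGraph k γ) :
    pullback f (pullback g p) = pullback (g ∘ f) p := rfl

lemma pullback_pullback_symm (e : α ≃ β) (p : ColoredGraph k α) :
    pullback e (pullback e.symm p) = p := by
  rw [pullback_pullback, Equiv.symm_comp_self]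
  rfl

lemma pullback_symm_pullback (e : α ≃ β) (p : ColoredGraph k β) :
    pullback e.symm (pullback e p) = p := by
  rw [pullback_pullback, Equiv.self_comp_symm]
  rfl

lemma pullback_sum (f : α → β) (g : γ → δ) (p : ColoredGraph k β) (q : ColoredGraph k δ) :
    pullback (Sum.map f g) (p.sum q) = (pullback f p).sum (pullback g q) := by
  refine Prod.ext ?_ ?_
  · ext (u | u) (v | v) <;> rfl
  · ext (u | u) <;> rfl

lemma mapColor_sum {m : ℕ} (f : Fin k → Fin m) (p : ColoredGraph k α) (q : ColoredGraph k β) :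
    mapColor f (p.sum q) = (mapColor f p).sum (mapColor f q) :=
  Prod.ext rfl (Sum.comp_elim f _ _)

end ColoredGraph

namespace ColorOps

open ColoredGraph

variable {k : ℕ} {α β : Type*}

def apply (o : ColorOps k) (p : ColoredGraph k α) : ColoredGraph k α :=
  (p.1 ⊔ o.2.comap p.2, o.1 ∘ p.2)

def comp (o₂ o₁ : ColorOps k) : ColorOps k :=
  (o₂.1 ∘ o₁.1, o₁.2 ⊔ o₂.2.comap o₁.1)

lemma apply_apply (o₂ o₁ : ColorOps k) (p : ColoredGraph k α) :
    o₂.apply (o₁.apply p) = (o₂.comp o₁).apply p := by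
  refine Prod.ext ?_ rfl
  ext u v
  simp [apply, comp, or_assoc]

lemma pullback_apply (f : α → β) (o : ColorOps k) (p : ColoredGraph k β) :
    pullback f (o.apply p) = o.apply (pullback f p) := by
  refine Prod.ext ?_ rfl
  ext u v
  simp [apply, pullback]

lemma apply_id_sup (X Y : SimpleGraph (Fin k)) (p : ColoredGraph k α) :
    apply (id, X ⊔ Y) p = apply (id, Y) (apply (id, X) p) := by
  rw [apply_apply]
  rfl

@[simp] lemma apply_id_bot (p : ColoredGraph k α) : apply (id, ⊥) p = p := by
  refine Prod.ext ?_ rfl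
  ext u v
  simp [apply]

lemma mapColor_apply {m : ℕ} (f : Fin k → Fin m) (o : ColorOps k) (o' : ColorOps m)
    (h₁ : o'.1 ∘ f = f ∘ o.1) (h₂ : o'.2.comap f = o.2) (p : ColoredGraph k α) :
    mapColor f (o.apply p) = o'.apply (mapColor f p) := by
  refine Prod.ext ?_ ?_
  · simp only [mapColor, ColorOps.apply, ← h₂, comap_comap]
  · simp only [mapColor, ColorOps.apply, ← Function.comp_assoc, h₁]

end ColorOps

lemma joinGraph_empty {k : ℕ} {α β : Type*} (G₁ : SimpleGraph α) (G₂ : SimpleGraph β)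
    (c₁ : α → Fin k) (c₂ : β → Fin k) : joinGraph G₁ G₂ c₁ c₂ ∅ = G₁ ⊕g G₂ := by
  ext (u | u) (v | v) <;> simp [joinGraph]

lemma addColorEdges_eq_sup_comap_edge {k : ℕ} {α : Type*} (G : SimpleGraph α) (c : α → Fin k)
    {i j : Fin k} (hij : i ≠ j) : addColorEdges G c i j = G ⊔ (edge i j).comap c := by
  ext u v
  simp only [addColorEdges, sup_adj, comap_adj, edge_adj]
  constructor
  · rintro (h | ⟨-, h⟩)
    · exact .inl h
    · refine .inr ⟨h, ?_⟩
      rcases h with ⟨hu, hv⟩ | ⟨hu, hv⟩ <;> rw [hu, hv] <;> tauto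
  · rintro (h | ⟨h, hne⟩)
    · exact .inl h
    · exact .inr ⟨fun huv => hne (huv ▸ rfl), h⟩

def recolorMap {k : ℕ} (i j : Fin k) (a : Fin k) : Fin k := if a = i then j else a

lemma SimpleGraph.comap_edge {α β : Type*} {f : α → β} (hf : Function.Injective f) (a b : α) :
    (edge (f a) (f b)).comap f = edge a b := by
  ext u v
  simp [edge_adj, hf.eq_iff]

lemma recolorMap_comp {k m : ℕ} {f : Fin k → Fin m} (hf : Function.Injective f) (i j : Fin k) :
    recolorMap (f i) (f j) ∘ f = f ∘ recolorMap i j := by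
  ext a
  simp only [Function.comp_apply, recolorMap, hf.eq_iff]
  split_ifs <;> rfl

namespace CWExpr

open ColoredGraph

variable {k : ℕ}

def colored (t : CWExpr k) : ColoredGraph k t.V := (t.graph, t.coloring)

lemma colored_union (t₁ t₂ : CWExpr k) :
    (union t₁ t₂).colored = t₁.colored.sum t₂.colored := by
  show (joinGraph _ _ _ _ ∅, _) = _
  rw [joinGraph_empty]
  rfl

lemma colored_addEdges (i j : Fin k) (hij : i ≠ j) (t : CWExpr k) :
    (addEdges i j hij t).colored = ColorOps.apply (id, edge i j) t.colored := by
  show (addColorEdges t.graph t.coloring i j, t.coloring) = _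
  rw [addColorEdges_eq_sup_comap_edge _ _ hij]
  rfl

lemma colored_recolor (i j : Fin k) (t : CWExpr k) :
    (recolor i j t).colored = ColorOps.apply (recolorMap i j, ⊥) t.colored := by
  refine Prod.ext ?_ rfl
  ext u v
  simp [colored, graph, ColorOps.apply]

lemma nonempty_V (t : CWExpr k) : Nonempty t.V := by
  induction t with
  | single => exact ⟨()⟩
  | union t₁ _ ih₁ => exact ⟨.inl ih₁.some⟩
  | addEdges _ _ _ _ ih | recolor _ _ _ ih => exact ih

lemma exists_eq_pullback_apply_sum (t : CWExpr k) (ht : Nontrivial t.V) :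
    ∃ (t₁ t₂ : CWExpr k) (o : ColorOps k) (e : t.V ≃ t₁.V ⊕ t₂.V),
      t.colored = pullback e (o.apply (t₁.colored.sum t₂.colored)) := by
  induction t with
  | single => exact absurd ht (not_nontrivial Unit)
  | union t₁ t₂ =>
    refine ⟨t₁, t₂, (id, ⊥), Equiv.refl _, ?_⟩
    rw [ColorOps.apply_id_bot, colored_union]
    rfl
  | addEdges i j hij t ih =>
    obtain ⟨t₁, t₂, o, e, h⟩ := ih ht
    refine ⟨t₁, t₂, ColorOps.comp (id, edge i j) o, e, ?_⟩
    rw [colored_addEdges, h, ColorOps.pullback_apply, ColorOps.pullback_apply,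
      ColorOps.apply_apply]
    rfl
  | recolor i j t ih =>
    obtain ⟨t₁, t₂, o, e, h⟩ := ih ht
    refine ⟨t₁, t₂, ColorOps.comp (recolorMap i j, ⊥) o, e, ?_⟩
    rw [colored_recolor, h, ColorOps.pullback_apply, ColorOps.pullback_apply,
      ColorOps.apply_apply]
    rfl

end CWExpr

open ColoredGraph

def realizable (k : ℕ) (α : Type*) : Set (ColoredGraph k α) :=
  {p | ∃ (t : CWExpr k) (e : α ≃ t.V), p = pullback e t.colored}

section Realizable

variable {k : ℕ} {α β : Type*} {p : ColoredGraph k α}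

lemma nonempty_of_mem_realizable (hp : p ∈ realizable k α) : Nonempty α := by
  obtain ⟨t, e, -⟩ := hp
  exact (t.nonempty_V).map e.symm

lemma pullback_mem_realizable {p : ColoredGraph k β} (hp : p ∈ realizable k β) (e : α ≃ β) :
    pullback e p ∈ realizable k α := by
  obtain ⟨t, e', rfl⟩ := hp
  exact ⟨t, e.trans e', rfl⟩

lemma single_mem_realizable [Unique α] (c : Fin k) :
    ((⊥ : SimpleGraph α), fun _ => c) ∈ realizable k α :=
  ⟨.single c, Equiv.ofUnique α Unit, rfl⟩

lemma sum_mem_realizable {q : ColoredGraph k β} (hp : p ∈ realizable k α)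
    (hq : q ∈ realizable k β) : p.sum q ∈ realizable k (α ⊕ β) := by
  obtain ⟨t₁, e₁, rfl⟩ := hp
  obtain ⟨t₂, e₂, rfl⟩ := hq
  refine ⟨.union t₁ t₂, Equiv.sumCongr e₁ e₂, ?_⟩
  rw [CWExpr.colored_union]
  exact (pullback_sum _ _ _ _).symm

lemma apply_edge_mem_realizable (hp : p ∈ realizable k α) {i j : Fin k} (hij : i ≠ j) :
    ColorOps.apply (id, edge i j) p ∈ realizable k α := by
  obtain ⟨t, e, rfl⟩ := hp
  refine ⟨.addEdges i j hij t, e, ?_⟩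
  rw [CWExpr.colored_addEdges]
  exact (ColorOps.pullback_apply _ _ _).symm

lemma apply_recolorMap_mem_realizable (hp : p ∈ realizable k α) (i j : Fin k) :
    ColorOps.apply (recolorMap i j, ⊥) p ∈ realizable k α := by
  obtain ⟨t, e, rfl⟩ := hp
  refine ⟨.recolor i j t, e, ?_⟩
  rw [CWExpr.colored_recolor]
  exact (ColorOps.pullback_apply _ _ _).symm

lemma mapColor_mem_realizable {m : ℕ} {f : Fin k → Fin m} (hf : Function.Injective f)
    (hp : p ∈ realizable k α) : mapColor f p ∈ realizable m α := by
  obtain ⟨t, e, rfl⟩ := hp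
  suffices h : ∀ t : CWExpr k, mapColor f t.colored ∈ realizable m t.V from
    pullback_mem_realizable (h t) e
  clear e t
  intro t
  -- each step rewrites `h` rather than the goal, whose vertex type is only definitionally `t.V`
  induction t with
  | single c => exact single_mem_realizable (α := Unit) (f c)
  | union t₁ t₂ ih₁ ih₂ =>
    have h := sum_mem_realizable ih₁ ih₂
    rw [← mapColor_sum] at h
    rw [CWExpr.colored_union]
    exact h
  | addEdges i j hij t ih =>
    have h := apply_edge_mem_realizable ih (hf.ne hij)
    rw [← ColorOps.mapColor_apply f (id, edge i j) _ rfl (comap_edge hf i j)] at h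
    rw [CWExpr.colored_addEdges]
    exact h
  | recolor i j t ih =>
    have h := apply_recolorMap_mem_realizable ih (f i) (f j)
    rw [← ColorOps.mapColor_apply f (recolorMap i j, ⊥) _ (recolorMap_comp hf i j) rfl] at h
    rw [CWExpr.colored_recolor]
    exact h

lemma bot_mem_realizable_fin (n : ℕ) (c : Fin (n + 1) → Fin k) :
    ((⊥ : SimpleGraph (Fin (n + 1))), c) ∈ realizable k (Fin (n + 1)) := by
  induction n with
  | zero =>
    rw [show c = fun _ => c 0 from funext fun i => congrArg c (Fin.fin_one_eq_zero i)]
    exact single_mem_realizable (α := Fin 1) _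
  | succ n ih =>
    have h := pullback_mem_realizable (sum_mem_realizable (ih (c ∘ Fin.castSucc))
      (single_mem_realizable (α := Fin 1) (c (Fin.last _)))) finSumFinEquiv.symm
    convert h using 1
    refine Prod.ext ?_ ?_
    · ext u v
      simp only [bot_adj, pullback, ColoredGraph.sum, comap_adj, false_iff]
      rcases finSumFinEquiv.symm u with u | u <;> rcases finSumFinEquiv.symm v with v | v <;> simp
    · ext i
      refine Fin.lastCases ?_ (fun i => ?_) i <;> simp [pullback, ColoredGraph.sum]

lemma apply_id_mem_realizable (hp : p ∈ realizable k α) (X : SimpleGraph (Fin k)) :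
    ColorOps.apply (id, X) p ∈ realizable k α := by
  classical
  suffices ∀ s : Finset (Sym2 (Fin k)), ColorOps.apply (id, fromEdgeSet ↑s) p ∈ realizable k α by
    simpa using this X.edgeFinset
  intro s
  induction s using Finset.induction_on with
  | empty => simpa using hp
  | insert e s _ ih =>
    induction e using Sym2.ind with
    | _ i j =>
    rw [Finset.coe_insert, Set.insert_eq, fromEdgeSet_union, sup_comm, ColorOps.apply_id_sup]
    by_cases hij : i = j
    · subst hij
      simpa [← edge.eq_def] using ih
    · exact apply_edge_mem_realizable ih hij

end Realizable

section CliqueWidth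

variable {V : Type*} {G : SimpleGraph V} {k : ℕ}

lemma hasCliqueWidthLE_iff : HasCliqueWidthLE G k ↔ ∃ c, (G, c) ∈ realizable k V := by
  constructor
  · rintro ⟨t, ⟨f⟩⟩
    refine ⟨t.coloring ∘ f, t, f.toEquiv, Prod.ext ?_ rfl⟩
    ext u v
    exact f.map_rel_iff.symm
  · rintro ⟨c, t, e, h⟩
    rw [show G = t.graph.comap e from congrArg Prod.fst h]
    exact ⟨t, ⟨Iso.comap e t.graph⟩⟩

lemma HasCliqueWidthLE.of_iso {W : Type*} {H : SimpleGraph W} (f : G ≃g H)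
    (hH : HasCliqueWidthLE H k) : HasCliqueWidthLE G k := by
  obtain ⟨t, ⟨g⟩⟩ := hH
  exact ⟨t, ⟨f.trans g⟩⟩

lemma HasCliqueWidthLE.mono {m : ℕ} (hG : HasCliqueWidthLE G k) (hkm : k ≤ m) :
    HasCliqueWidthLE G m := by
  rw [hasCliqueWidthLE_iff] at hG ⊢
  obtain ⟨c, hc⟩ := hG
  exact ⟨_, mapColor_mem_realizable (Fin.castLE_injective hkm) hc⟩

lemma hasCliqueWidthLE_natCard [Finite V] [Nonempty V] (G : SimpleGraph V) :
    HasCliqueWidthLE G (Nat.card V) := by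
  obtain ⟨n, hn⟩ := Nat.exists_eq_succ_of_ne_zero (Nat.card_pos (α := V)).ne'
  let e : V ≃ Fin (n + 1) := Finite.equivFinOfCardEq hn
  rw [hn, hasCliqueWidthLE_iff]
  refine ⟨e, ?_⟩
  convert apply_id_mem_realizable (pullback_mem_realizable (bot_mem_realizable_fin n id) e)
    (G.comap e.symm) using 1
  refine Prod.ext ?_ rfl
  ext u v
  simp [ColorOps.apply, pullback]

lemma cliqueWidth_le_iff [Finite V] [Nonempty V] : cliqueWidth G ≤ k ↔ HasCliqueWidthLE G k :=
  ⟨fun h => HasCliqueWidthLE.mono (Nat.sInf_mem (s := {m | HasCliqueWidthLE G m})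
    ⟨_, hasCliqueWidthLE_natCard G⟩) h, fun h => Nat.sInf_le h⟩

end CliqueWidth

section Recurrence

open Finset Nat

lemma factorial_succ_mul_factorial_succ_le (a b : ℕ) : (a + 1)! * (b + 1)! ≤ (a + b + 1)! := by
  induction b with
  | zero => simp
  | succ b ih =>
    calc (a + 1)! * (b + 1 + 1)! = (b + 2) * ((a + 1)! * (b + 1)!) := by
          rw [factorial_succ (b + 1)]; ring
      _ ≤ (a + b + 2) * (a + b + 1)! := by gcongr; omega
      _ = (a + (b + 1) + 1)! := by rw [← add_assoc, ← factorial_succ]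

lemma choose_mul_factorial_sq_mul_factorial_sq_le (m j : ℕ) :
    (m + j + 2).choose (m + 1) * ((m + 1)! ^ 2 * (j + 1)! ^ 2) ≤ (m + j + 2)! * (m + j + 1)! := by
  have h := add_choose_mul_factorial_mul_factorial (j + 1) (m + 1)
  rw [show j + 1 + (m + 1) = m + j + 2 by ring] at h
  calc (m + j + 2).choose (m + 1) * ((m + 1)! ^ 2 * (j + 1)! ^ 2)
      = (m + j + 2).choose (m + 1) * (j + 1)! * (m + 1)! * ((m + 1)! * (j + 1)!) := by ring
    _ ≤ (m + j + 2)! * (m + j + 1)! := by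
      rw [h]
      exact Nat.mul_le_mul_left _ (factorial_succ_mul_factorial_succ_le m j)

lemma mul_le_factorial_sq_mul_pow {f : ℕ → ℕ} {B E : ℕ} (h₀ : f 0 = 0) (h₁ : f 1 ≤ B)
    (hrec : ∀ n, 2 ≤ n → f n ≤ ∑ m ∈ range (n + 1), n.choose m * (E * (f m * f (n - m))))
    (n : ℕ) : E * f n ≤ n ! ^ 2 * (B * E) ^ n := by
  induction n using Nat.strong_induction_on with
  | _ n ih =>
  match n with
  | 0 => simp [h₀]
  | 1 => simpa [mul_comm E] using Nat.mul_le_mul_left E h₁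
  | n + 2 =>
    have hterm : ∀ m ∈ range (n + 1), E * ((n + 2).choose (m + 1) *
        (E * (f (m + 1) * f (n + 2 - (m + 1))))) ≤ (n + 2)! * (n + 1)! * (B * E) ^ (n + 2) := by
      intro m hm
      obtain ⟨j, rfl⟩ : ∃ j, n = m + j := ⟨n - m, by simp at hm; omega⟩
      rw [show m + j + 2 - (m + 1) = j + 1 by omega]
      calc E * ((m + j + 2).choose (m + 1) * (E * (f (m + 1) * f (j + 1))))
          = (m + j + 2).choose (m + 1) * ((E * f (m + 1)) * (E * f (j + 1))) := by ring
        _ ≤ (m + j + 2).choose (m + 1) * (((m + 1)! ^ 2 * (B * E) ^ (m + 1)) *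
              ((j + 1)! ^ 2 * (B * E) ^ (j + 1))) :=
          Nat.mul_le_mul_left _ (Nat.mul_le_mul (ih _ (by omega)) (ih _ (by omega)))
        _ = (m + j + 2).choose (m + 1) * ((m + 1)! ^ 2 * (j + 1)! ^ 2) *
              (B * E) ^ (m + j + 2) := by ring
        _ ≤ (m + j + 2)! * (m + j + 1)! * (B * E) ^ (m + j + 2) :=
          Nat.mul_le_mul_right _ (choose_mul_factorial_sq_mul_factorial_sq_le m j)
    calc E * f (n + 2)
        ≤ E * ∑ m ∈ range (n + 3), (n + 2).choose m * (E * (f m * f (n + 2 - m))) :=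
          Nat.mul_le_mul_left E (hrec (n + 2) (by omega))
      _ = ∑ m ∈ range (n + 1), E * ((n + 2).choose (m + 1) *
            (E * (f (m + 1) * f (n + 2 - (m + 1))))) := by
          -- the terms `m = 0` and `m = n + 2` vanish because `f 0 = 0`
          rw [sum_range_succ, sum_range_succ', mul_add, mul_add, mul_sum]
          simp [h₀]
      _ ≤ (n + 1) * ((n + 2)! * (n + 1)! * (B * E) ^ (n + 2)) := by
          simpa using sum_le_card_nsmul _ _ _ hterm
      _ ≤ (n + 2) * ((n + 2)! * (n + 1)! * (B * E) ^ (n + 2)) := by gcongr; omega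
      _ = (n + 2)! ^ 2 * (B * E) ^ (n + 2) := by rw [factorial_succ (n + 1)]; ring

end Recurrence

section Counting

variable {k : ℕ} {α β : Type*}

lemma exists_eq_sumMap_sumCompl_symm [Fintype α] [DecidableEq α] {γ : Type*}
    (e : α ≃ β ⊕ γ) : ∃ (A : Finset α) (e₁ : {a // a ∈ A} ≃ β) (e₂ : {a // a ∉ A} ≃ γ),
      ⇑e = Sum.map e₁ e₂ ∘ (Equiv.sumCompl (· ∈ A)).symm := by
  let A := univ.filter fun a => (e a).isLeft
  have hA : ∀ a, a ∈ A ↔ (e a).isLeft := by simp [A]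
  refine ⟨A, (e.subtypeEquiv hA).trans Equiv.sumIsLeft,
    (e.subtypeEquiv fun a => (hA a).not.trans Sum.not_isLeft).trans Equiv.sumIsRight, ?_⟩
  funext a
  by_cases ha : a ∈ A
  · rw [Function.comp_apply, Equiv.sumCompl_symm_apply_of_pos ha]
    simp
  · rw [Function.comp_apply, Equiv.sumCompl_symm_apply_of_neg ha]
    simp

lemma realizable_subset_iUnion [Fintype α] [DecidableEq α] [Nontrivial α] :
    realizable k α ⊆ ⋃ A : Finset α,
      (fun x : ColorOps k × ColoredGraph k {a // a ∈ A} × ColoredGraph k {a // a ∉ A} =>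
        pullback (Equiv.sumCompl (· ∈ A)).symm (x.1.apply (x.2.1.sum x.2.2))) ''
      (Set.univ ×ˢ realizable k _ ×ˢ realizable k _) := by
  rintro _ ⟨t, e, rfl⟩
  obtain ⟨t₁, t₂, o, e₀, h⟩ := t.exists_eq_pullback_apply_sum e.symm.nontrivial
  obtain ⟨A, e₁, e₂, hA⟩ := exists_eq_sumMap_sumCompl_symm (e.trans e₀)
  refine Set.mem_iUnion.2 ⟨A, (o, pullback e₁ t₁.colored, pullback e₂ t₂.colored),
    ⟨trivial, ⟨t₁, e₁, rfl⟩, ⟨t₂, e₂, rfl⟩⟩, ?_⟩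
  dsimp only
  rw [← pullback_sum, ← ColorOps.pullback_apply, pullback_pullback, ← hA, h]
  rfl

lemma ncard_realizable_le_sum [Fintype α] [DecidableEq α] [Nontrivial α] :
    (realizable k α).ncard ≤ ∑ A : Finset α, Nat.card (ColorOps k) *
      ((realizable k {a // a ∈ A}).ncard * (realizable k {a // a ∉ A}).ncard) := by
  refine (Set.ncard_le_ncard realizable_subset_iUnion (Set.toFinite _)).trans <|
    (Set.ncard_iUnion_le_of_fintype _).trans <| sum_le_sum fun A _ => ?_
  refine (Set.ncard_image_le (Set.toFinite _)).trans ?_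
  rw [Set.ncard_prod, Set.ncard_prod, Set.ncard_univ]

lemma ncard_realizable_congr (e : α ≃ β) : (realizable k α).ncard = (realizable k β).ncard := by
  have himage : realizable k α = pullback e '' realizable k β := by
    refine Set.Subset.antisymm (fun p hp => ⟨_, pullback_mem_realizable hp e.symm,
      pullback_pullback_symm e p⟩) ?_
    rintro _ ⟨q, hq, rfl⟩
    exact pullback_mem_realizable hq e
  refine himage ▸ Set.ncard_image_of_injective _ fun p q hpq => ?_
  simpa only [pullback_symm_pullback] using congrArg (pullback e.symm) hpq

lemma ncard_realizable_eq_fin [Fintype α] :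
    (realizable k α).ncard = (realizable k (Fin (Fintype.card α))).ncard :=
  ncard_realizable_congr (Fintype.equivFin α)

lemma ncard_realizable_fin_le (n : ℕ) (hn : 2 ≤ n) :
    (realizable k (Fin n)).ncard ≤ ∑ m ∈ range (n + 1), n.choose m * (Nat.card (ColorOps k) *
      ((realizable k (Fin m)).ncard * (realizable k (Fin (n - m))).ncard)) := by
  have : Nontrivial (Fin n) := Fin.nontrivial_iff_two_le.2 hn
  refine ncard_realizable_le_sum.trans (le_of_eq ?_)
  rw [← powerset_univ, sum_congr rfl fun A _ => by
    rw [ncard_realizable_eq_fin, ncard_realizable_eq_fin (α := {a // a ∉ A}),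
      Fintype.card_subtype_compl, Fintype.card_coe, Fintype.card_fin],
    sum_powerset_apply_card (fun m => Nat.card (ColorOps k) *
      ((realizable k (Fin m)).ncard * (realizable k (Fin (n - m))).ncard)), card_univ,
    Fintype.card_fin]
  rfl

lemma realizable_fin_zero : realizable k (Fin 0) = ∅ :=
  Set.eq_empty_of_forall_notMem fun _ hp => (nonempty_of_mem_realizable hp).elim Fin.elim0

lemma ncard_realizable_fin_one_le : (realizable k (Fin 1)).ncard ≤ k := by
  have hinj : Function.Injective fun p : ColoredGraph k (Fin 1) => p.2 0 := by
    intro p q h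
    refine Prod.ext ?_ (funext fun u => by rwa [Fin.fin_one_eq_zero u])
    ext u v
    simp [Fin.fin_one_eq_zero u, Fin.fin_one_eq_zero v]
  calc (realizable k (Fin 1)).ncard ≤ Nat.card (ColoredGraph k (Fin 1)) := Set.ncard_le_card _
    _ ≤ Nat.card (Fin k) := Nat.card_le_card_of_injective _ hinj
    _ = k := Nat.card_fin k

lemma ncard_hasCliqueWidthLE_le {V : Type*} [Fintype V] :
    {G : SimpleGraph V | HasCliqueWidthLE G k}.ncard ≤
      (Fintype.card V)! ^ 2 * (k * Nat.card (ColorOps k)) ^ Fintype.card V := by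
  have hsub : {G : SimpleGraph V | HasCliqueWidthLE G k} ⊆ Prod.fst '' realizable k V :=
    fun G hG => by
      obtain ⟨c, hc⟩ := hasCliqueWidthLE_iff.1 hG
      exact ⟨_, hc, rfl⟩
  have : Nonempty (ColorOps k) := ⟨(id, ⊥)⟩
  calc {G : SimpleGraph V | HasCliqueWidthLE G k}.ncard
      ≤ (realizable k (Fin (Fintype.card V))).ncard := by
        rw [← ncard_realizable_eq_fin]
        exact (Set.ncard_le_ncard hsub (Set.toFinite _)).trans (Set.ncard_image_le (Set.toFinite _))
    _ ≤ Nat.card (ColorOps k) * (realizable k (Fin (Fintype.card V))).ncard :=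
        Nat.le_mul_of_pos_left _ Nat.card_pos
    _ ≤ _ := mul_le_factorial_sq_mul_pow (by simp [realizable_fin_zero])
        ncard_realizable_fin_one_le ncard_realizable_fin_le _

end Counting

section IncidenceGraph

lemma C4Free.of_injective_hom {V W : Type*} {G : SimpleGraph V} {H : SimpleGraph W} (f : G →g H)
    (hf : Function.Injective f) (hH : C4Free H) : C4Free G := by
  rintro ⟨u, v, w, x, huv, huw, hux, hvw, hvx, hwx, a₁, a₂, a₃, a₄⟩
  exact hH ⟨f u, f v, f w, f x, hf.ne huv, hf.ne huw, hf.ne hux, hf.ne hvw, hf.ne hvx, hf.ne hwx,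
    f.map_adj a₁, f.map_adj a₂, f.map_adj a₃, f.map_adj a₄⟩

/-- Points `(x, y)` versus non-vertical lines `(a, b)`, i.e. `y = a x + b`, of the affine plane. -/
def incidenceGraph (F : Type*) [CommRing F] : SimpleGraph ((F × F) ⊕ (F × F)) where
  Adj
    | .inl P, .inr L | .inr L, .inl P => P.2 = L.1 * P.1 + L.2
    | _, _ => False
  symm := ⟨by rintro (_ | _) (_ | _) h <;> exact h⟩
  loopless := ⟨by rintro (_ | _) h <;> exact h⟩

variable {F : Type*} [CommRing F]

lemma eq_or_eq_of_incident [IsDomain F] {P Q L M : F × F} (hPL : P.2 = L.1 * P.1 + L.2)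
    (hQL : Q.2 = L.1 * Q.1 + L.2) (hPM : P.2 = M.1 * P.1 + M.2) (hQM : Q.2 = M.1 * Q.1 + M.2) :
    P = Q ∨ L = M := by
  by_cases hx : P.1 = Q.1
  · exact .inl (Prod.ext hx (by rw [hPL, hQL, hx]))
  · have hslope : (L.1 - M.1) * (P.1 - Q.1) = 0 := by linear_combination hQL - hPL + hPM - hQM
    have ha : L.1 = M.1 := sub_eq_zero.1 <| (mul_eq_zero.1 hslope).resolve_right (sub_ne_zero.2 hx)
    exact .inr (Prod.ext ha (by linear_combination hPM - hPL - P.1 * ha))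

lemma c4Free_incidenceGraph [IsDomain F] : C4Free (incidenceGraph F) := by
  rintro ⟨u, v, w, x, -, huw, -, -, hvx, -, a₁, a₂, a₃, a₄⟩
  rcases u with P | L <;> rcases v with Q | M <;> rcases w with R | N <;> rcases x with S | O <;>
    simp only [incidenceGraph] at a₁ a₂ a₃ a₄
  · exact (eq_or_eq_of_incident a₁ a₂ a₄ a₃).elim (huw ∘ congrArg _) (hvx ∘ congrArg _)
  · exact (eq_or_eq_of_incident a₁ a₄ a₂ a₃).elim (hvx ∘ congrArg _) (huw ∘ congrArg _)

lemma card_pow_three_le_ncard_edgeSet_incidenceGraph [Fintype F] :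
    Fintype.card F ^ 3 ≤ (incidenceGraph F).edgeSet.ncard := by
  let f : F × F × F → (incidenceGraph F).edgeSet := fun q =>
    ⟨s(.inl (q.1, q.2.1 * q.1 + q.2.2), .inr q.2), rfl⟩
  have hf : Function.Injective f := fun q q' h => by
    have h := congrArg Subtype.val h
    simp [f] at h
    exact Prod.ext h.1.1 h.2
  calc Fintype.card F ^ 3 = Nat.card (F × F × F) := by simp [pow_succ, mul_assoc]
    _ ≤ Nat.card (incidenceGraph F).edgeSet := Nat.card_le_card_of_injective f hf
    _ = _ := Nat.card_coe_set_eq _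

end IncidenceGraph

lemma two_pow_ncard_edgeSet_le {V : Type*} [Finite V] (H : SimpleGraph V) :
    2 ^ H.edgeSet.ncard ≤ {G | G ≤ H}.ncard := by
  have hedge : ∀ s ∈ 𝒫 H.edgeSet, (fromEdgeSet s).edgeSet = s := fun s hs => by
    rw [edgeSet_fromEdgeSet, sdiff_eq_left, Set.disjoint_left]
    exact fun e he => H.not_isDiag_of_mem_edgeSet (hs he)
  rw [← Set.ncard_powerset]
  refine Set.ncard_le_ncard_of_injOn fromEdgeSet (fun s hs => ?_) (fun s hs t ht hst => ?_)
  · exact (fromEdgeSet_le _).2 (Set.sdiff_subset.trans hs)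
  · rw [← hedge s hs, ← hedge t ht, hst]

lemma exists_le_not_hasCliqueWidthLE {V : Type*} [Fintype V] (H : SimpleGraph V) {k : ℕ}
    (h : (Fintype.card V)! ^ 2 * (k * Nat.card (ColorOps k)) ^ Fintype.card V <
      2 ^ H.edgeSet.ncard) :
    ∃ G ≤ H, ¬ HasCliqueWidthLE G k := by
  by_contra! hall
  have hle := Set.ncard_le_ncard (s := {G | G ≤ H}) (t := {G | HasCliqueWidthLE G k}) hall
  exact (h.trans_le ((two_pow_ncard_edgeSet_le H).trans hle)).not_ge ncard_hasCliqueWidthLE_le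

open Filter in
lemma eventually_factorial_sq_mul_pow_lt (C : ℕ) :
    ∀ᶠ p : ℕ in atTop, (2 * p ^ 2)! ^ 2 * C ^ (2 * p ^ 2) < 2 ^ p ^ 3 := by
  have hpoly : ∀ᶠ p : ℕ in atTop, p ^ 9 ≤ 2 ^ p := by
    filter_upwards [(isLittleO_pow_const_const_pow_of_one_lt (R := ℝ) 9 one_lt_two).bound one_pos]
      with p hp
    simp only [norm_pow, RCLike.norm_natCast, Real.norm_ofNat, one_mul] at hp
    exact_mod_cast hp
  filter_upwards [hpoly, eventually_gt_atTop (16 * C ^ 2)] with p hpoly hp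
  have hp₀ : 0 < p := by omega
  have hbase : ((2 * p ^ 2) ^ 2 * C) ^ 2 < 2 ^ p :=
    calc ((2 * p ^ 2) ^ 2 * C) ^ 2 = 16 * C ^ 2 * p ^ 8 := by ring
      _ < p * p ^ 8 := Nat.mul_lt_mul_of_pos_right hp (by positivity)
      _ = p ^ 9 := by ring
      _ ≤ 2 ^ p := hpoly
  calc (2 * p ^ 2)! ^ 2 * C ^ (2 * p ^ 2)
      ≤ ((2 * p ^ 2) ^ (2 * p ^ 2)) ^ 2 * C ^ (2 * p ^ 2) := by
        gcongr
        exact Nat.factorial_le_pow _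
    _ = ((2 * p ^ 2) ^ 2 * C) ^ (2 * p ^ 2) := by
        generalize 2 * p ^ 2 = n
        ring
    _ = (((2 * p ^ 2) ^ 2 * C) ^ 2) ^ p ^ 2 := pow_mul _ _ _
    _ < (2 ^ p) ^ p ^ 2 := Nat.pow_lt_pow_left hbase (by positivity)
    _ = 2 ^ p ^ 3 := by rw [← pow_mul]; ring

/-- The class of `C₄`-free graphs has unbounded clique-width: for every `k ≥ 1` there is
a finite simple `C₄`-free graph whose clique-width is strictly greater than `k`. -/
theorem C4_free_unbounded_cliqueWidth :
    ∀ k : ℕ, 1 ≤ k → ∃ (n : ℕ) (G : SimpleGraph (Fin n)), C4Free G ∧ k < cliqueWidth G := by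
  intro k _
  obtain ⟨N, hN⟩ := Filter.eventually_atTop.1
    (eventually_factorial_sq_mul_pow_lt (k * Nat.card (ColorOps k)))
  obtain ⟨p, hpN, hp⟩ := Nat.exists_infinite_primes N
  have : Fact p.Prime := ⟨hp⟩
  let H := incidenceGraph (ZMod p)
  have hcard : Fintype.card ((ZMod p × ZMod p) ⊕ (ZMod p × ZMod p)) = 2 * p ^ 2 := by
    simp only [Fintype.card_sum, Fintype.card_prod, ZMod.card]
    ring
  obtain ⟨G, hGH, hG⟩ := exists_le_not_hasCliqueWidthLE H <| by
    rw [hcard]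
    refine (hN p hpN).trans_le (Nat.pow_le_pow_right two_pos ?_)
    simpa [ZMod.card] using card_pow_three_le_ncard_edgeSet_incidenceGraph (F := ZMod p)
  let e := Fintype.equivFin ((ZMod p × ZMod p) ⊕ (ZMod p × ZMod p))
  refine ⟨_, G.comap e.symm, ?_, ?_⟩
  · exact c4Free_incidenceGraph.of_injective_hom ((Hom.ofLE hGH).comp (Iso.comap e.symm G).toHom)
      e.symm.injective
  · have : Nonempty (Fin (Fintype.card _)) := ⟨e (.inl 0)⟩
    exact not_le.1 fun h => hG ((cliqueWidth_le_iff.1 h).of_iso (Iso.comap e.symm G).symm)
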